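/- arXiv:2505.04190 — 4 statements merged into one kernel-verified Lean document; each statement's English description precedes it below -/
import Mathlib

section
/- Let M be a linear subspace of V. Then the following are equivalent: (i) the second moment is injective on M up to sign, i.e., for all X,Y ∈ M, if X_ℓᵀX_ℓ = Y_ℓᵀY_ℓ for all ℓ = 1,…,L then X = Y or X = −Y; (ii) the second moment is bi-Lipschitz on M, i.e., there exist 0 < C₁ ≤ C₂ < ∞ with C₁·d_σ(X,Y) ≤ ‖√(XᵀX) − √(YᵀY)‖ ≤ C₂·d_σ(X,Y) for all X,Y ∈ M; (iii) for every pair of nonzero X,Y ∈ M, the tuple XᵀY = (X_1ᵀY_1,…,X_LᵀY_L) is not skew-symmetric, i.e., it is not the case that X_ℓᵀY_ℓ + Y_ℓᵀX_ℓ = 0 for all ℓ. -/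
open scoped BigOperators
open Matrix

namespace GPR

variable {L : ℕ} {N R : Fin L → ℕ}

/-- The signal space: `L`-tuples of real `N ℓ × R ℓ` matrices. -/
abbrev V (N R : Fin L → ℕ) := ∀ ℓ : Fin L, Matrix (Fin (N ℓ)) (Fin (R ℓ)) ℝ

/-- Frobenius norm of a tuple of matrices: `(Σ_ℓ Σ_{i,j} (X_ℓ)_{ij}²)^{1/2}`. -/
noncomputable def fnorm {m n : Fin L → ℕ} (X : ∀ ℓ : Fin L, Matrix (Fin (m ℓ)) (Fin (n ℓ)) ℝ) : ℝ :=
  Real.sqrt (∑ ℓ, ∑ i, ∑ j, (X ℓ i j) ^ 2)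

/-- The group `H = ∏_ℓ O(N ℓ)`, as tuples of orthogonal matrices. -/
abbrev HGroup (N : Fin L → ℕ) := ∀ ℓ : Fin L, Matrix.orthogonalGroup (Fin (N ℓ)) ℝ

/-- The action of `H` on `V`: `(Q · X)_ℓ = Q_ℓ X_ℓ`. -/
def act (Q : HGroup N) (X : V N R) : V N R :=
  fun ℓ => (Q ℓ : Matrix (Fin (N ℓ)) (Fin (N ℓ)) ℝ) * X ℓ

/-- `d_σ(X,Y) = min(‖X−Y‖, ‖X+Y‖)`. -/
noncomputable def dSigma (X Y : V N R) : ℝ := min (fnorm (X - Y)) (fnorm (X + Y))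

/-- `d_H(X,Y) = min_{Q ∈ H} ‖X − Q·Y‖`. -/
noncomputable def dH (X Y : V N R) : ℝ := ⨅ Q : HGroup N, fnorm (X - act Q Y)

/-- The positive semidefinite square root `√(XᵀX)` of the Gram matrix of a single matrix. -/
noncomputable def gramSqrt {n d : ℕ} (X : Matrix (Fin n) (Fin d) ℝ) : Matrix (Fin d) (Fin d) ℝ :=
  ((Matrix.posSemidef_conjTranspose_mul_self X).1.eigenvectorUnitary : Matrix (Fin d) (Fin d) ℝ) *
    diagonal ((√·) ∘ (Matrix.posSemidef_conjTranspose_mul_self X).1.eigenvalues) *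
    (star (Matrix.posSemidef_conjTranspose_mul_self X).1.eigenvectorUnitary : Matrix (Fin d) (Fin d) ℝ)

/-- The tuple `√(XᵀX) = (√(X₁ᵀX₁), …, √(X_LᵀX_L))`. -/
noncomputable def sqrtGram (X : V N R) : ∀ ℓ : Fin L, Matrix (Fin (R ℓ)) (Fin (R ℓ)) ℝ :=
  fun ℓ => gramSqrt (X ℓ)

/-- The second moment: tuple of Gram matrices `XᵀX = (X₁ᵀX₁, …, X_LᵀX_L)`. -/
def gram (X : V N R) : ∀ ℓ : Fin L, Matrix (Fin (R ℓ)) (Fin (R ℓ)) ℝ :=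
  fun ℓ => (X ℓ)ᵀ * X ℓ

/-- A set `S ⊆ V` is transverse to the orbits of `H` if whenever `X ∈ S` and `Q·X ∈ S`,
one has `Q·X = X` or `Q·X = −X`. -/
def Transverse (S : Set (V N R)) : Prop :=
  ∀ X ∈ S, ∀ Q : HGroup N, act Q X ∈ S → act Q X = X ∨ act Q X = -X


end GPR

/-!
(i) ⇔ (iii) is polarization: `(X+Y)ᵀ(X+Y) − (X−Y)ᵀ(X−Y) = 2 (XᵀY + YᵀX)` and
`(X+Y)ᵀ(X−Y) + (X−Y)ᵀ(X+Y) = 2 (XᵀX − YᵀY)`, so `X, Y` have a skew product exactly when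
`X + Y, X − Y` have the same second moment.

The upper bound holds on all of `V` with `C₂ = √2`. The Hermitian dilation `S_X = [0, Xᵀ; X, 0]`
has `|S_X| = diag(√(XᵀX), √(XXᵀ))`, and `A ↦ |A|` is `1`-Lipschitz for the Frobenius norm on
symmetric matrices: diagonalising `A = U a Uᵀ`, `B = W b Wᵀ` gives
`‖f(A) − f(B)‖² = Σᵢⱼ (f aᵢ − f bⱼ)² (UᵀW)ᵢⱼ²` for every `f`.

For the lower bound, (iii) and compactness of the unit sphere of `M` give `c > 0` with
`‖UᵀW + WᵀU‖ ≥ c ‖U‖ ‖W‖` on `M`. For `U = X + Y`, `W = X − Y` the left side is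
`2 ‖XᵀX − YᵀY‖ ≤ 2 (‖X‖ + ‖Y‖) ‖√(XᵀX) − √(YᵀY)‖`, while `‖X‖ + ‖Y‖ ≤ ‖U‖ + ‖W‖` and
`‖U‖ ‖W‖ ≥ d_σ(X, Y) (‖U‖ + ‖W‖) / 2`.
-/

open scoped Matrix.Norms.Frobenius MatrixOrder

namespace Matrix

variable {m n : Type*}

theorem isHermitian_fromBlocks_zero_transpose (X : Matrix n m ℝ) :
    (fromBlocks 0 Xᵀ X 0).IsHermitian :=
  .fromBlocks (by simp) (by simp) (by simp)

variable [Fintype m] [Fintype n]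

theorem frobenius_norm_sq_eq_sum (A : Matrix m n ℝ) : ‖A‖ ^ 2 = ∑ i, ∑ j, A i j ^ 2 := by
  rw [frobenius_norm_def, ← Real.sqrt_eq_rpow, Real.sq_sqrt (by positivity)]
  simp

theorem frobenius_norm_sq_eq_trace (A : Matrix m n ℝ) : ‖A‖ ^ 2 = trace (Aᵀ * A) := by
  rw [frobenius_norm_sq_eq_sum, Finset.sum_comm]
  simp [trace, mul_apply, sq]

theorem frobenius_norm_sq_fromBlocks {p q : Type*} [Fintype p] [Fintype q]
    (A : Matrix m p ℝ) (B : Matrix m q ℝ) (C : Matrix n p ℝ) (D : Matrix n q ℝ) :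
    ‖fromBlocks A B C D‖ ^ 2 = ‖A‖ ^ 2 + ‖B‖ ^ 2 + ‖C‖ ^ 2 + ‖D‖ ^ 2 := by
  simp only [frobenius_norm_sq_eq_sum, Fintype.sum_sum_type, fromBlocks_apply₁₁,
    fromBlocks_apply₁₂, fromBlocks_apply₂₁, fromBlocks_apply₂₂, Finset.sum_add_distrib]
  ring

theorem transpose_mul_self_nonneg (X : Matrix m n ℝ) : 0 ≤ Xᵀ * X := by
  simpa using (posSemidef_conjTranspose_mul_self X).nonneg

theorem frobenius_norm_unitary_mul_mul_unitary [DecidableEq m] [DecidableEq n]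
    {U : Matrix m m ℝ} {V : Matrix n n ℝ} (hU : U ∈ unitary (Matrix m m ℝ))
    (hV : V ∈ unitary (Matrix n n ℝ)) (A : Matrix m n ℝ) : ‖U * A * V‖ = ‖A‖ := by
  have hU' : Uᵀ * U = 1 := Unitary.star_mul_self_of_mem hU
  have hV' : V * Vᵀ = 1 := Unitary.mul_star_self_of_mem hV
  rw [← sq_eq_sq₀ (norm_nonneg _) (norm_nonneg _), frobenius_norm_sq_eq_trace,
    frobenius_norm_sq_eq_trace]
  calc trace ((U * A * V)ᵀ * (U * A * V)) = trace (Vᵀ * (Aᵀ * (Uᵀ * U) * A * V)) := by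
        simp only [transpose_mul, Matrix.mul_assoc]
    _ = trace (Aᵀ * A * (V * Vᵀ)) := by
        rw [hU', Matrix.mul_one, trace_mul_comm, Matrix.mul_assoc]
    _ = trace (Aᵀ * A) := by rw [hV', Matrix.mul_one]

variable [DecidableEq n]

theorem frobenius_norm_sq_conj_diagonal_sub {U V : Matrix n n ℝ}
    (hU : U ∈ unitary (Matrix n n ℝ)) (hV : V ∈ unitary (Matrix n n ℝ)) (f g : n → ℝ) :
    ‖U * diagonal f * star U - V * diagonal g * star V‖ ^ 2 =
      ∑ i, ∑ j, (f i - g j) ^ 2 * (star U * V) i j ^ 2 := by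
  have hconj : star U * (U * diagonal f * star U - V * diagonal g * star V) * V =
      diagonal f * (star U * V) - (star U * V) * diagonal g := by
    simp only [Matrix.mul_sub, Matrix.sub_mul, ← Matrix.mul_assoc, Unitary.star_mul_self_of_mem hU,
      Matrix.one_mul]
    simp only [Matrix.mul_assoc, Unitary.star_mul_self_of_mem hV, Matrix.mul_one]
  rw [← frobenius_norm_unitary_mul_mul_unitary (Unitary.star_mem hU) hV, hconj,
    frobenius_norm_sq_eq_sum]
  simp only [sub_apply, diagonal_mul, mul_diagonal]
  exact Finset.sum_congr rfl fun i _ => Finset.sum_congr rfl fun j _ => by ring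

namespace IsHermitian

theorem cfc_eq_mul_diagonal_mul {A : Matrix n n ℝ} (hA : A.IsHermitian) (f : ℝ → ℝ) :
    cfc f A = (hA.eigenvectorUnitary : Matrix n n ℝ) * diagonal (f ∘ hA.eigenvalues) *
      star (hA.eigenvectorUnitary : Matrix n n ℝ) := by
  rw [hA.cfc_eq, IsHermitian.cfc, Unitary.conjStarAlgAut_apply]
  rfl

theorem frobenius_norm_cfc_sub_cfc_le {A B : Matrix n n ℝ} (hA : A.IsHermitian)
    (hB : B.IsHermitian) {f : ℝ → ℝ} (hf : LipschitzWith 1 f) :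
    ‖cfc f A - cfc f B‖ ≤ ‖A - B‖ := by
  have hsq (g : ℝ → ℝ) : ‖cfc g A - cfc g B‖ ^ 2 = ∑ i, ∑ j,
      (g (hA.eigenvalues i) - g (hB.eigenvalues j)) ^ 2 *
        (star (hA.eigenvectorUnitary : Matrix n n ℝ) * hB.eigenvectorUnitary) i j ^ 2 := by
    rw [cfc_eq_mul_diagonal_mul hA, cfc_eq_mul_diagonal_mul hB]
    exact frobenius_norm_sq_conj_diagonal_sub hA.eigenvectorUnitary.2 hB.eigenvectorUnitary.2 _ _
  have hAB : ‖A - B‖ ^ 2 = ‖cfc (id : ℝ → ℝ) A - cfc (id : ℝ → ℝ) B‖ ^ 2 := by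
    rw [cfc_id ℝ A, cfc_id ℝ B]
  rw [← sq_le_sq₀ (norm_nonneg _) (norm_nonneg _), hAB, hsq, hsq]
  refine Finset.sum_le_sum fun i _ => Finset.sum_le_sum fun j _ =>
    mul_le_mul_of_nonneg_right (sq_le_sq.mpr ?_) (sq_nonneg _)
  simpa [Real.dist_eq] using hf.dist_le_mul (hA.eigenvalues i) (hB.eigenvalues j)

end IsHermitian

theorem frobenius_norm_cfcSqrt_transpose_mul_self (X : Matrix m n ℝ) :
    ‖CFC.sqrt (Xᵀ * X)‖ = ‖X‖ := by
  have hsymm : (CFC.sqrt (Xᵀ * X))ᵀ = CFC.sqrt (Xᵀ * X) := by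
    simpa [star_eq_conjTranspose] using (CFC.sqrt_nonneg (Xᵀ * X)).isSelfAdjoint.star_eq
  rw [← sq_eq_sq₀ (norm_nonneg _) (norm_nonneg _), frobenius_norm_sq_eq_trace,
    frobenius_norm_sq_eq_trace, hsymm, CFC.sqrt_mul_sqrt_self _ (transpose_mul_self_nonneg X)]

theorem norm_transpose_mul_self_sub_le (X Y : Matrix m n ℝ) :
    ‖Xᵀ * X - Yᵀ * Y‖ ≤ (‖X‖ + ‖Y‖) * ‖CFC.sqrt (Xᵀ * X) - CFC.sqrt (Yᵀ * Y)‖ := by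
  set P := CFC.sqrt (Xᵀ * X)
  set Q := CFC.sqrt (Yᵀ * Y)
  have hPQ : Xᵀ * X - Yᵀ * Y = P * (P - Q) + (P - Q) * Q := by
    rw [← CFC.sqrt_mul_sqrt_self _ (transpose_mul_self_nonneg X),
      ← CFC.sqrt_mul_sqrt_self _ (transpose_mul_self_nonneg Y)]
    noncomm_ring
  calc ‖Xᵀ * X - Yᵀ * Y‖ ≤ ‖P‖ * ‖P - Q‖ + ‖P - Q‖ * ‖Q‖ := by
        rw [hPQ]
        exact (norm_add_le _ _).trans (add_le_add (frobenius_norm_mul _ _) (frobenius_norm_mul _ _))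
    _ = (‖X‖ + ‖Y‖) * ‖P - Q‖ := by
        rw [frobenius_norm_cfcSqrt_transpose_mul_self, frobenius_norm_cfcSqrt_transpose_mul_self]
        ring

variable [DecidableEq m]

theorem fromBlocks_zero_nonneg {P : Matrix m m ℝ} {Q : Matrix n n ℝ} (hP : 0 ≤ P) (hQ : 0 ≤ Q) :
    0 ≤ fromBlocks P 0 0 Q := by
  obtain ⟨B, rfl⟩ := CStarAlgebra.nonneg_iff_eq_star_mul_self.mp hP
  obtain ⟨C, rfl⟩ := CStarAlgebra.nonneg_iff_eq_star_mul_self.mp hQ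
  have h := star_mul_self_nonneg (fromBlocks B 0 0 C)
  rw [star_eq_conjTranspose, fromBlocks_conjTranspose, fromBlocks_multiply] at h
  simpa [star_eq_conjTranspose] using h

theorem cfcSqrt_fromBlocks_zero {P : Matrix m m ℝ} {Q : Matrix n n ℝ} (hP : 0 ≤ P) (hQ : 0 ≤ Q) :
    CFC.sqrt (fromBlocks P 0 0 Q) = fromBlocks (CFC.sqrt P) 0 0 (CFC.sqrt Q) := by
  rw [CFC.sqrt_eq_iff _ _ (fromBlocks_zero_nonneg hP hQ)
    (fromBlocks_zero_nonneg (CFC.sqrt_nonneg P) (CFC.sqrt_nonneg Q)), fromBlocks_multiply]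
  simp [CFC.sqrt_mul_sqrt_self, hP, hQ]

theorem cfcAbs_fromBlocks_zero_transpose (X : Matrix n m ℝ) :
    CFC.abs (fromBlocks 0 Xᵀ X 0) = fromBlocks (CFC.sqrt (Xᵀ * X)) 0 0 (CFC.sqrt (X * Xᵀ)) := by
  rw [CFC.abs, star_eq_conjTranspose, fromBlocks_conjTranspose, fromBlocks_multiply]
  simpa using cfcSqrt_fromBlocks_zero (transpose_mul_self_nonneg X)
    (by simpa using transpose_mul_self_nonneg Xᵀ)

theorem frobenius_norm_cfcSqrt_sub_le (X Y : Matrix n m ℝ) :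
    ‖CFC.sqrt (Xᵀ * X) - CFC.sqrt (Yᵀ * Y)‖ ≤ √2 * ‖X - Y‖ := by
  have h := (isHermitian_fromBlocks_zero_transpose X).frobenius_norm_cfc_sub_cfc_le
    (isHermitian_fromBlocks_zero_transpose Y) lipschitzWith_one_norm
  rw [← CFC.abs_eq_cfc_norm _ (isHermitian_fromBlocks_zero_transpose X).isSelfAdjoint,
    ← CFC.abs_eq_cfc_norm _ (isHermitian_fromBlocks_zero_transpose Y).isSelfAdjoint,
    cfcAbs_fromBlocks_zero_transpose, cfcAbs_fromBlocks_zero_transpose,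
    ← sq_le_sq₀ (norm_nonneg _) (norm_nonneg _)] at h
  simp only [sub_eq_add_neg, fromBlocks_neg, fromBlocks_add, neg_zero, add_zero,
    ← transpose_neg, ← transpose_add, frobenius_norm_sq_fromBlocks, frobenius_norm_transpose,
    norm_zero] at h
  simp only [← sub_eq_add_neg] at h
  rw [← sq_le_sq₀ (norm_nonneg _) (by positivity), mul_pow, Real.sq_sqrt zero_le_two]
  nlinarith [sq_nonneg ‖CFC.sqrt (X * Xᵀ) - CFC.sqrt (Y * Yᵀ)‖]

end Matrix

theorem norm_add_norm_le_norm_sub_add_norm_add {E : Type*} [SeminormedAddCommGroup E]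
    [NormedSpace ℝ E] (x y : E) : ‖x‖ + ‖y‖ ≤ ‖x - y‖ + ‖x + y‖ := by
  have hx : ‖(2 : ℝ) • x‖ ≤ ‖x - y‖ + ‖x + y‖ := by
    rw [show (2 : ℝ) • x = x - y + (x + y) by module]
    exact norm_add_le _ _
  have hy : ‖(2 : ℝ) • y‖ ≤ ‖x - y‖ + ‖x + y‖ := by
    rw [show (2 : ℝ) • y = x + y - (x - y) by module, add_comm ‖x - y‖]
    exact norm_sub_le _ _
  rw [norm_smul, Real.norm_two] at hx hy
  linarith

theorem min_mul_add_le {a b : ℝ} (ha : 0 ≤ a) (hb : 0 ≤ b) : min a b * (a + b) ≤ 2 * (a * b) := by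
  rcases le_total a b with h | h
  · rw [min_eq_left h]; nlinarith
  · rw [min_eq_right h]; nlinarith

theorem Submodule.exists_pos_mul_norm_mul_norm_le_of_bilinear {E F : Type*}
    [NormedAddCommGroup E] [NormedSpace ℝ E] [FiniteDimensional ℝ E]
    [NormedAddCommGroup F] [NormedSpace ℝ F] (M : Submodule ℝ E) (B : E →ₗ[ℝ] E →ₗ[ℝ] F)
    (hB : ∀ u ∈ M, ∀ w ∈ M, B u w = 0 → u = 0 ∨ w = 0) :
    ∃ c > 0, ∀ u ∈ M, ∀ w ∈ M, c * (‖u‖ * ‖w‖) ≤ ‖B u w‖ := by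
  set S := Metric.sphere (0 : E) 1 ∩ M
  have hunit : ∀ u ∈ M, u ≠ 0 → ‖u‖⁻¹ • u ∈ S := fun u hu hu0 =>
    ⟨by simp [norm_smul, hu0], M.smul_mem _ hu⟩
  rcases S.eq_empty_or_nonempty with hS | hS
  · refine ⟨1, one_pos, fun u hu w _ => ?_⟩
    have hu0 : u = 0 := by
      by_contra hu0
      simpa [hS] using hunit u hu hu0
    simp [hu0]
  have hSc : IsCompact S := (isCompact_sphere 0 1).inter_right M.closed_of_finiteDimensional
  have hcont : Continuous fun p : E × E => ‖B p.1 p.2‖ :=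
    B.toContinuousBilinearMap.continuous₂.norm
  obtain ⟨p, ⟨hp₁, hp₂⟩, hmin⟩ := (hSc.prod hSc).exists_isMinOn (hS.prod hS) hcont.continuousOn
  have hne (x : E) (hx : x ∈ S) : x ≠ 0 := ne_zero_of_mem_unit_sphere ⟨x, hx.1⟩
  refine ⟨‖B p.1 p.2‖, norm_pos_iff.mpr fun h => ?_, fun u hu w hw => ?_⟩
  · rcases hB _ hp₁.2 _ hp₂.2 h with h | h
    exacts [hne _ hp₁ h, hne _ hp₂ h]
  rcases eq_or_ne u 0 with rfl | hu0
  · simp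
  rcases eq_or_ne w 0 with rfl | hw0
  · simp
  have hBuw : B u w = (‖u‖ * ‖w‖) • B (‖u‖⁻¹ • u) (‖w‖⁻¹ • w) := by
    simp only [map_smul, LinearMap.smul_apply, smul_smul]
    rw [show ‖u‖ * ‖w‖ * (‖w‖⁻¹ * ‖u‖⁻¹) = 1 by field_simp, one_smul]
  rw [hBuw, norm_smul, Real.norm_of_nonneg (by positivity), mul_comm (‖u‖ * ‖w‖)]
  exact mul_le_mul_of_nonneg_right
    (isMinOn_iff.mp hmin _ (Set.mk_mem_prod (hunit u hu hu0) (hunit w hw hw0))) (by positivity)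

namespace GPR

section

variable {L : ℕ}

section TupleNorm

variable {m n : Fin L → ℕ}

theorem fnorm_eq_norm_toLp (X : ∀ ℓ : Fin L, Matrix (Fin (m ℓ)) (Fin (n ℓ)) ℝ) :
    fnorm X = ‖WithLp.toLp 2 X‖ := by
  simp [fnorm, PiLp.norm_eq_of_L2, frobenius_norm_sq_eq_sum]

theorem fnorm_nonneg (X : ∀ ℓ : Fin L, Matrix (Fin (m ℓ)) (Fin (n ℓ)) ℝ) : 0 ≤ fnorm X :=
  Real.sqrt_nonneg _

theorem fnorm_eq_zero {X : ∀ ℓ : Fin L, Matrix (Fin (m ℓ)) (Fin (n ℓ)) ℝ} :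
    fnorm X = 0 ↔ X = 0 := by
  simp [fnorm_eq_norm_toLp]

theorem fnorm_smul (c : ℝ) (X : ∀ ℓ : Fin L, Matrix (Fin (m ℓ)) (Fin (n ℓ)) ℝ) :
    fnorm (c • X) = |c| * fnorm X := by
  simp [fnorm_eq_norm_toLp, norm_smul]

theorem norm_le_fnorm (X : ∀ ℓ : Fin L, Matrix (Fin (m ℓ)) (Fin (n ℓ)) ℝ) (ℓ : Fin L) :
    ‖X ℓ‖ ≤ fnorm X := by
  simpa [fnorm_eq_norm_toLp] using PiLp.norm_apply_le (WithLp.toLp 2 X) ℓ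

theorem fnorm_le_mul_fnorm {m' n' : Fin L → ℕ} {X : ∀ ℓ : Fin L, Matrix (Fin (m ℓ)) (Fin (n ℓ)) ℝ}
    {Y : ∀ ℓ : Fin L, Matrix (Fin (m' ℓ)) (Fin (n' ℓ)) ℝ} {c : ℝ} (hc : 0 ≤ c)
    (h : ∀ ℓ, ‖X ℓ‖ ≤ c * ‖Y ℓ‖) : fnorm X ≤ c * fnorm Y := by
  simp only [fnorm_eq_norm_toLp, PiLp.norm_eq_of_L2]
  rw [← Real.sqrt_sq hc, ← Real.sqrt_mul (sq_nonneg c), Finset.mul_sum]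
  gcongr with ℓ
  simpa [mul_pow] using pow_le_pow_left₀ (norm_nonneg _) (h ℓ) 2

theorem fnorm_add_fnorm_le (X Y : ∀ ℓ : Fin L, Matrix (Fin (m ℓ)) (Fin (n ℓ)) ℝ) :
    fnorm X + fnorm Y ≤ fnorm (X - Y) + fnorm (X + Y) := by
  simpa [fnorm_eq_norm_toLp] using
    norm_add_norm_le_norm_sub_add_norm_add (WithLp.toLp 2 X) (WithLp.toLp 2 Y)

end TupleNorm

variable {N R : Fin L → ℕ}

theorem dSigma_nonneg (X Y : V N R) : 0 ≤ dSigma X Y :=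
  le_min (fnorm_nonneg _) (fnorm_nonneg _)

theorem dSigma_eq_zero {X Y : V N R} : dSigma X Y = 0 ↔ X = Y ∨ X = -Y := by
  constructor
  · intro h
    rcases min_eq_iff.mp h with ⟨h, -⟩ | ⟨h, -⟩
    exacts [.inl (sub_eq_zero.mp (fnorm_eq_zero.mp h)),
      .inr (eq_neg_of_add_eq_zero_left (fnorm_eq_zero.mp h))]
  · rintro (rfl | rfl) <;> simp [dSigma, fnorm_eq_zero.mpr, fnorm_nonneg]

section SecondMoment

theorem gramSqrt_eq_cfcSqrt {n d : ℕ} (X : Matrix (Fin n) (Fin d) ℝ) :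
    gramSqrt X = CFC.sqrt (Xᵀ * X) := by
  have hX := posSemidef_conjTranspose_mul_self X
  rw [← conjTranspose_eq_transpose_of_trivial, CFC.sqrt_eq_real_sqrt _ hX.nonneg, cfcₙ_eq_cfc,
    hX.1.cfc_eq_mul_diagonal_mul]
  rfl

theorem sqrtGram_eq_of_gram_eq {X Y : V N R} (h : gram X = gram Y) : sqrtGram X = sqrtGram Y :=
  funext fun ℓ => by
    simp only [sqrtGram, gramSqrt_eq_cfcSqrt]
    exact congr_arg CFC.sqrt (congr_fun h ℓ)

theorem sqrtGram_neg (X : V N R) : sqrtGram (-X) = sqrtGram X :=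
  sqrtGram_eq_of_gram_eq <| funext fun ℓ => by simp [gram]

theorem fnorm_sqrtGram_sub_le (X Y : V N R) :
    fnorm (sqrtGram X - sqrtGram Y) ≤ √2 * fnorm (X - Y) :=
  fnorm_le_mul_fnorm (by positivity) fun ℓ => by
    simpa [sqrtGram, gramSqrt_eq_cfcSqrt] using frobenius_norm_cfcSqrt_sub_le (X ℓ) (Y ℓ)

theorem fnorm_sqrtGram_sub_le_dSigma (X Y : V N R) :
    fnorm (sqrtGram X - sqrtGram Y) ≤ √2 * dSigma X Y := by
  rw [dSigma, mul_min_of_nonneg _ _ (by positivity)]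
  refine le_min (fnorm_sqrtGram_sub_le X Y) ?_
  simpa [sqrtGram_neg] using fnorm_sqrtGram_sub_le X (-Y)

theorem fnorm_gram_sub_le (X Y : V N R) :
    fnorm (gram X - gram Y) ≤ (fnorm X + fnorm Y) * fnorm (sqrtGram X - sqrtGram Y) :=
  fnorm_le_mul_fnorm (by positivity [fnorm_nonneg X, fnorm_nonneg Y]) fun ℓ =>
    (norm_transpose_mul_self_sub_le (X ℓ) (Y ℓ)).trans <| by
      simp only [Pi.sub_apply, sqrtGram, gramSqrt_eq_cfcSqrt]
      gcongr <;> exact norm_le_fnorm _ ℓ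

end SecondMoment

section SymmTransposeMul

noncomputable def symmTransposeMul :
    V N R →ₗ[ℝ] V N R →ₗ[ℝ] ∀ ℓ : Fin L, Matrix (Fin (R ℓ)) (Fin (R ℓ)) ℝ :=
  LinearMap.mk₂ ℝ (fun X Y ℓ => (X ℓ)ᵀ * Y ℓ + (Y ℓ)ᵀ * X ℓ)
    (fun _ _ _ => funext fun _ => by
      simp only [Pi.add_apply, transpose_add, Matrix.add_mul, Matrix.mul_add]; abel)
    (fun _ _ _ => funext fun _ => by simp)
    (fun _ _ _ => funext fun _ => by
      simp only [Pi.add_apply, transpose_add, Matrix.add_mul, Matrix.mul_add]; abel)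
    (fun _ _ _ => funext fun _ => by simp)

theorem symmTransposeMul_eq_zero {X Y : V N R} :
    symmTransposeMul X Y = 0 ↔ ∀ ℓ, (X ℓ)ᵀ * Y ℓ + (Y ℓ)ᵀ * X ℓ = 0 :=
  funext_iff

theorem symmTransposeMul_add_sub (X Y : V N R) :
    symmTransposeMul (X + Y) (X - Y) = (2 : ℝ) • (gram X - gram Y) := by
  funext ℓ
  simp only [symmTransposeMul, LinearMap.mk₂_apply, gram, Pi.add_apply, Pi.sub_apply,
    Pi.smul_apply, transpose_add, transpose_sub, Matrix.add_mul, Matrix.sub_mul, Matrix.mul_add,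
    Matrix.mul_sub]
  module

theorem gram_add_sub_gram_sub (X Y : V N R) :
    gram (X + Y) - gram (X - Y) = (2 : ℝ) • symmTransposeMul X Y := by
  funext ℓ
  simp only [symmTransposeMul, LinearMap.mk₂_apply, gram, Pi.add_apply, Pi.sub_apply,
    Pi.smul_apply, transpose_add, transpose_sub, Matrix.add_mul, Matrix.sub_mul, Matrix.mul_add,
    Matrix.mul_sub]
  module

theorem exists_pos_mul_fnorm_le_fnorm_symmTransposeMul (M : Submodule ℝ (V N R))
    (hM : ∀ X ∈ M, ∀ Y ∈ M, symmTransposeMul X Y = 0 → X = 0 ∨ Y = 0) :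
    ∃ c > 0, ∀ X ∈ M, ∀ Y ∈ M, c * (fnorm X * fnorm Y) ≤ fnorm (symmTransposeMul X Y) := by
  let e := WithLp.linearEquiv 2 ℝ (V N R)
  let e' := WithLp.linearEquiv 2 ℝ (∀ ℓ : Fin L, Matrix (Fin (R ℓ)) (Fin (R ℓ)) ℝ)
  obtain ⟨c, hc, h⟩ := (M.comap e.toLinearMap).exists_pos_mul_norm_mul_norm_le_of_bilinear
    ((symmTransposeMul.compl₁₂ e.toLinearMap e.toLinearMap).compr₂ e'.symm.toLinearMap)
    fun u hu w hw huw => by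
      simpa using hM _ hu _ hw (congr_arg WithLp.ofLp huw)
  refine ⟨c, hc, fun X hX Y hY => ?_⟩
  simp only [fnorm_eq_norm_toLp]
  exact h _ hX _ hY

end SymmTransposeMul

theorem mul_dSigma_le_fnorm_sqrtGram_sub {c : ℝ} (hc : 0 ≤ c) {X Y : V N R}
    (h : c * (fnorm (X + Y) * fnorm (X - Y)) ≤ fnorm (symmTransposeMul (X + Y) (X - Y))) :
    c / 4 * dSigma X Y ≤ fnorm (sqrtGram X - sqrtGram Y) := by
  set a := fnorm (X - Y)
  set b := fnorm (X + Y)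
  set F := fnorm (sqrtGram X - sqrtGram Y)
  have ha : 0 ≤ a := fnorm_nonneg _
  have hb : 0 ≤ b := fnorm_nonneg _
  have hab : c * (a * b) ≤ 2 * ((a + b) * F) :=
    calc c * (a * b) = c * (b * a) := by ring
      _ ≤ 2 * fnorm (gram X - gram Y) := by
        rwa [symmTransposeMul_add_sub, fnorm_smul, abs_two] at h
      _ ≤ 2 * ((a + b) * F) := by
        gcongr
        exact (fnorm_gram_sub_le X Y).trans
          (mul_le_mul_of_nonneg_right (fnorm_add_fnorm_le X Y) (fnorm_nonneg _))
  have hmin := mul_le_mul_of_nonneg_left (min_mul_add_le ha hb) hc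
  rw [dSigma]
  rcases (add_nonneg ha hb).eq_or_lt with hab0 | hab0
  · have hmin0 : min a b = 0 := by
      rw [min_eq_left (by linarith)]; linarith
    rw [hmin0, mul_zero]
    exact fnorm_nonneg _
  · exact le_of_mul_le_mul_right (by linarith) hab0

def GramInjectiveUpToSignOn (M : Submodule ℝ (V N R)) : Prop :=
  ∀ X ∈ M, ∀ Y ∈ M, (∀ ℓ, (X ℓ)ᵀ * X ℓ = (Y ℓ)ᵀ * Y ℓ) → X = Y ∨ X = -Y

def SqrtGramBiLipschitzOn (M : Submodule ℝ (V N R)) : Prop :=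
  ∃ C₁ C₂ : ℝ, 0 < C₁ ∧ C₁ ≤ C₂ ∧ ∀ X ∈ M, ∀ Y ∈ M,
    C₁ * dSigma X Y ≤ fnorm (sqrtGram X - sqrtGram Y) ∧
    fnorm (sqrtGram X - sqrtGram Y) ≤ C₂ * dSigma X Y

def NoSkewProductOn (M : Submodule ℝ (V N R)) : Prop :=
  ∀ X ∈ M, X ≠ 0 → ∀ Y ∈ M, Y ≠ 0 → ¬ (∀ ℓ, (X ℓ)ᵀ * Y ℓ + (Y ℓ)ᵀ * X ℓ = 0)

theorem gramInjectiveUpToSignOn_iff_noSkewProductOn (M : Submodule ℝ (V N R)) :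
    GramInjectiveUpToSignOn M ↔ NoSkewProductOn M := by
  constructor
  · intro h X hX hX0 Y hY hY0 hskew
    have hgram : gram (X + Y) = gram (X - Y) := by
      rw [← sub_eq_zero, gram_add_sub_gram_sub, symmTransposeMul_eq_zero.mpr hskew, smul_zero]
    rcases h _ (M.add_mem hX hY) _ (M.sub_mem hX hY) (congr_fun hgram) with h | h
    · exact hY0 (by rw [show Y = (2⁻¹ : ℝ) • (X + Y - (X - Y)) by module, h, sub_self, smul_zero])
    · exact hX0 (by rw [show X = (2⁻¹ : ℝ) • (X + Y + (X - Y)) by module, h, neg_add_cancel,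
        smul_zero])
  · intro h X hX Y hY hgram
    by_contra! hne
    refine h _ (M.add_mem hX hY) (fun h0 => hne.2 (eq_neg_of_add_eq_zero_left h0)) _
      (M.sub_mem hX hY) (sub_ne_zero.mpr hne.1) (symmTransposeMul_eq_zero.mp ?_)
    rw [symmTransposeMul_add_sub, show gram X = gram Y from funext hgram, sub_self, smul_zero]

theorem sqrtGramBiLipschitzOn_of_noSkewProductOn {M : Submodule ℝ (V N R)}
    (h : NoSkewProductOn M) : SqrtGramBiLipschitzOn M := by
  obtain ⟨c, hc, hcM⟩ := exists_pos_mul_fnorm_le_fnorm_symmTransposeMul M fun X hX Y hY hXY => by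
    by_contra! hne
    exact h X hX hne.1 Y hY hne.2 (symmTransposeMul_eq_zero.mp hXY)
  refine ⟨min (c / 4) √2, √2, by positivity, min_le_right _ _, fun X hX Y hY =>
    ⟨?_, fnorm_sqrtGram_sub_le_dSigma X Y⟩⟩
  exact (mul_le_mul_of_nonneg_right (min_le_left _ _) (dSigma_nonneg X Y)).trans
    (mul_dSigma_le_fnorm_sqrtGram_sub hc.le (hcM _ (M.add_mem hX hY) _ (M.sub_mem hX hY)))

theorem gramInjectiveUpToSignOn_of_sqrtGramBiLipschitzOn {M : Submodule ℝ (V N R)}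
    (h : SqrtGramBiLipschitzOn M) : GramInjectiveUpToSignOn M := by
  obtain ⟨C₁, _, hC₁, -, hbound⟩ := h
  intro X hX Y hY hgram
  have hlower := (hbound X hX Y hY).1
  rw [sqrtGram_eq_of_gram_eq (funext hgram), sub_self, fnorm_eq_zero.mpr rfl] at hlower
  exact dSigma_eq_zero.mp (le_antisymm (nonpos_of_mul_nonpos_right hlower hC₁) (dSigma_nonneg X Y))

end

theorem linear_injective_iff_biLipschitz_iff_no_skew_general
    (L : ℕ) (N R : Fin L → ℕ) (M : Submodule ℝ (V N R)) :
    ((∀ X ∈ M, ∀ Y ∈ M, (∀ ℓ, (X ℓ)ᵀ * X ℓ = (Y ℓ)ᵀ * Y ℓ) → X = Y ∨ X = -Y) ↔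
      (∃ C₁ C₂ : ℝ, 0 < C₁ ∧ C₁ ≤ C₂ ∧ ∀ X ∈ M, ∀ Y ∈ M,
        C₁ * dSigma X Y ≤ fnorm (sqrtGram X - sqrtGram Y) ∧
        fnorm (sqrtGram X - sqrtGram Y) ≤ C₂ * dSigma X Y)) ∧
    ((∃ C₁ C₂ : ℝ, 0 < C₁ ∧ C₁ ≤ C₂ ∧ ∀ X ∈ M, ∀ Y ∈ M,
        C₁ * dSigma X Y ≤ fnorm (sqrtGram X - sqrtGram Y) ∧
        fnorm (sqrtGram X - sqrtGram Y) ≤ C₂ * dSigma X Y) ↔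
      (∀ X ∈ M, X ≠ 0 → ∀ Y ∈ M, Y ≠ 0 →
        ¬ (∀ ℓ, (X ℓ)ᵀ * Y ℓ + (Y ℓ)ᵀ * X ℓ = 0))) := by
  have h13 := gramInjectiveUpToSignOn_iff_noSkewProductOn M
  have h32 : NoSkewProductOn M → SqrtGramBiLipschitzOn M :=
    sqrtGramBiLipschitzOn_of_noSkewProductOn
  have h21 : SqrtGramBiLipschitzOn M → GramInjectiveUpToSignOn M :=
    gramInjectiveUpToSignOn_of_sqrtGramBiLipschitzOn
  exact ⟨⟨h32 ∘ h13.mp, h21⟩, ⟨h13.mp ∘ h21, h32⟩⟩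

/-- For a linear subspace `M ⊆ V`, the following are equivalent:
(i) the second moment is injective on `M` up to sign;
(ii) the second moment is bi-Lipschitz on `M`;
(iii) for all nonzero `X, Y ∈ M`, the tuple `XᵀY` is not skew-symmetric. -/
theorem linear_injective_iff_biLipschitz_iff_no_skew
    (L : ℕ) (hL : 0 < L) (N R : Fin L → ℕ) (hN : ∀ ℓ, 0 < N ℓ) (hR : ∀ ℓ, 0 < R ℓ)
    (M : Submodule ℝ (V N R)) :
    ((∀ X ∈ M, ∀ Y ∈ M, (∀ ℓ, (X ℓ)ᵀ * X ℓ = (Y ℓ)ᵀ * Y ℓ) → X = Y ∨ X = -Y) ↔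
      (∃ C₁ C₂ : ℝ, 0 < C₁ ∧ C₁ ≤ C₂ ∧ ∀ X ∈ M, ∀ Y ∈ M,
        C₁ * dSigma X Y ≤ fnorm (sqrtGram X - sqrtGram Y) ∧
        fnorm (sqrtGram X - sqrtGram Y) ≤ C₂ * dSigma X Y)) ∧
    ((∃ C₁ C₂ : ℝ, 0 < C₁ ∧ C₁ ≤ C₂ ∧ ∀ X ∈ M, ∀ Y ∈ M,
        C₁ * dSigma X Y ≤ fnorm (sqrtGram X - sqrtGram Y) ∧
        fnorm (sqrtGram X - sqrtGram Y) ≤ C₂ * dSigma X Y) ↔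
      (∀ X ∈ M, X ≠ 0 → ∀ Y ∈ M, Y ≠ 0 →
        ¬ (∀ ℓ, (X ℓ)ᵀ * Y ℓ + (Y ℓ)ᵀ * X ℓ = 0))) :=
  linear_injective_iff_biLipschitz_iff_no_skew_general L N R M

end GPR
end

section
/- Let M = {(s, t, s+1, t+1) : s, t ∈ ℝ} ⊂ ℝ⁴ and let H = {−1,1}⁴ act on ℝ⁴ by componentwise sign changes. There is no constant C > 0 such that C·min(‖X − Y‖, ‖X + Y‖) ≤ min_{ε∈H} ‖X − ε·Y‖ for all X, Y ∈ M. In particular, for every a > 0, the points X_a = (a, a, a+1, a+1) and Y_a = (a, −a, a+1, −a+1) of M satisfy min(‖X_a − Y_a‖, ‖X_a + Y_a‖) = 2√2·a while min_{ε∈H} ‖X_a − ε·Y_a‖ ≤ 2. -/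
open scoped BigOperators

/-- The Euclidean norm on `ℝ⁴`. -/
noncomputable def nrm4 (x : Fin 4 → ℝ) : ℝ := Real.sqrt (∑ i, (x i) ^ 2)

/-- Componentwise sign-change action of `ε ∈ {−1,1}⁴` on `ℝ⁴`. -/
def signAct (ε x : Fin 4 → ℝ) : Fin 4 → ℝ := fun i => ε i * x i

/-- The affine plane `M = {(s, t, s+1, t+1) : s, t ∈ ℝ} ⊂ ℝ⁴`. -/
def Mplane : Set (Fin 4 → ℝ) := {v | ∃ s t : ℝ, v = ![s, t, s + 1, t + 1]}

/-- `d_H(X,Y) = min_{ε ∈ {−1,1}⁴} ‖X − ε·Y‖`. -/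
noncomputable def dH4 (X Y : Fin 4 → ℝ) : ℝ :=
  ⨅ ε : {ε : Fin 4 → ℝ // ∀ i, ε i = 1 ∨ ε i = -1}, nrm4 (X - signAct ε.1 Y)

/-!
Along the family `X_a = (a, a, a+1, a+1)`, `Y_a = (a, −a, a+1, −a+1)` of points of `M`, both
`X_a − Y_a = (0, 2a, 0, 2a)` and `X_a + Y_a = (2a, 0, 2a+2, 2)` have length at least `2√2·a`,
whereas flipping the signs of the second and fourth coordinates of `Y_a` leaves
`X_a − ε·Y_a = (0, 0, 0, 2)`. So `d_H` stays bounded while `min(‖X − Y‖, ‖X + Y‖)` grows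
linearly in `a`, and no constant `C > 0` can bound the latter by `d_H / C`.
-/

lemma nrm4_nonneg (x : Fin 4 → ℝ) : 0 ≤ nrm4 x := Real.sqrt_nonneg _

lemma nrm4_vec (x₀ x₁ x₂ x₃ : ℝ) :
    nrm4 ![x₀, x₁, x₂, x₃] = Real.sqrt (x₀ ^ 2 + x₁ ^ 2 + x₂ ^ 2 + x₃ ^ 2) := by
  simp [nrm4, Fin.sum_univ_four]

lemma signAct_vec (e₀ e₁ e₂ e₃ y₀ y₁ y₂ y₃ : ℝ) :
    signAct ![e₀, e₁, e₂, e₃] ![y₀, y₁, y₂, y₃] = ![e₀ * y₀, e₁ * y₁, e₂ * y₂, e₃ * y₃] := by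
  ext i
  fin_cases i <;> rfl

lemma dH4_le_nrm4_sub_signAct (X Y : Fin 4 → ℝ) {ε : Fin 4 → ℝ}
    (hε : ∀ i, ε i = 1 ∨ ε i = -1) : dH4 X Y ≤ nrm4 (X - signAct ε Y) :=
  ciInf_le (f := fun η : {η : Fin 4 → ℝ // ∀ i, η i = 1 ∨ η i = -1} => nrm4 (X - signAct η.1 Y))
    ⟨0, by rintro _ ⟨η, rfl⟩; exact nrm4_nonneg _⟩ ⟨ε, hε⟩

lemma not_exists_pos_mul_le_of_linear_of_bounded {f g : ℝ → ℝ} {k B : ℝ} (hk : 0 < k)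
    (hf : ∀ a, 0 < a → f a = k * a) (hg : ∀ a, 0 < a → g a ≤ B) :
    ¬ ∃ C : ℝ, 0 < C ∧ ∀ a, 0 < a → C * f a ≤ g a := by
  rintro ⟨C, hC, hCfg⟩
  set a := (|B| + 1) / (C * k)
  have ha : 0 < a := by positivity
  have hCka : C * (k * a) = |B| + 1 := by simp only [a]; field_simp
  have := (hCfg a ha).trans (hg a ha)
  rw [hf a ha, hCka] at this
  linarith [le_abs_self B]

section Witnesses

variable {a : ℝ}

lemma nrm4_witness_sub (ha : 0 ≤ a) :
    nrm4 (![a, a, a + 1, a + 1] - ![a, -a, a + 1, -a + 1]) = 2 * Real.sqrt 2 * a := by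
  have h2 : Real.sqrt 2 ^ 2 = 2 := Real.sq_sqrt zero_le_two
  simp only [Matrix.cons_sub_cons, Matrix.empty_sub_empty, nrm4_vec]
  rw [Real.sqrt_eq_iff_mul_self_eq (by positivity) (by positivity)]
  linear_combination (-4 * a ^ 2) * h2

lemma le_nrm4_witness_add (ha : 0 ≤ a) :
    2 * Real.sqrt 2 * a ≤ nrm4 (![a, a, a + 1, a + 1] + ![a, -a, a + 1, -a + 1]) := by
  have h2 : Real.sqrt 2 ^ 2 = 2 := Real.sq_sqrt zero_le_two
  simp only [Matrix.cons_add_cons, Matrix.empty_add_empty, nrm4_vec]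
  rw [Real.le_sqrt (by positivity) (by positivity)]
  nlinarith [sq_nonneg (a + 1)]

lemma min_nrm4_witness (ha : 0 ≤ a) :
    min (nrm4 (![a, a, a + 1, a + 1] - ![a, -a, a + 1, -a + 1]))
        (nrm4 (![a, a, a + 1, a + 1] + ![a, -a, a + 1, -a + 1])) = 2 * Real.sqrt 2 * a := by
  rw [nrm4_witness_sub ha, min_eq_left (le_nrm4_witness_add ha)]

lemma dH4_witness_le_two : dH4 ![a, a, a + 1, a + 1] ![a, -a, a + 1, -a + 1] ≤ 2 := by
  have hε : ∀ i, ![(1 : ℝ), -1, 1, -1] i = 1 ∨ ![(1 : ℝ), -1, 1, -1] i = -1 := by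
    intro i; fin_cases i <;> simp
  refine (dH4_le_nrm4_sub_signAct _ _ hε).trans_eq ?_
  rw [signAct_vec, Matrix.cons_sub_cons, Matrix.cons_sub_cons, Matrix.cons_sub_cons,
    Matrix.cons_sub_cons, Matrix.empty_sub_empty, nrm4_vec,
    Real.sqrt_eq_iff_mul_self_eq (by positivity) zero_le_two]
  ring

end Witnesses

/-- There is no `C > 0` with `C·d_σ(X,Y) ≤ d_H(X,Y)` on the plane
`M = {(s,t,s+1,t+1)}`; in particular, for every `a > 0` the points
`X_a = (a,a,a+1,a+1)` and `Y_a = (a,−a,a+1,−a+1)` of `M` satisfy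
`min(‖X_a−Y_a‖, ‖X_a+Y_a‖) = 2√2·a` while `min_{ε} ‖X_a − ε·Y_a‖ ≤ 2`. -/
theorem plane_not_lower_lipschitz :
    (¬ ∃ C : ℝ, 0 < C ∧ ∀ X ∈ Mplane, ∀ Y ∈ Mplane,
        C * min (nrm4 (X - Y)) (nrm4 (X + Y)) ≤ dH4 X Y) ∧
    ∀ a : ℝ, 0 < a →
      ![a, a, a + 1, a + 1] ∈ Mplane ∧ ![a, -a, a + 1, -a + 1] ∈ Mplane ∧
      min (nrm4 (![a, a, a + 1, a + 1] - ![a, -a, a + 1, -a + 1]))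
          (nrm4 (![a, a, a + 1, a + 1] + ![a, -a, a + 1, -a + 1]))
        = 2 * Real.sqrt 2 * a ∧
      dH4 ![a, a, a + 1, a + 1] ![a, -a, a + 1, -a + 1] ≤ 2 := by
  have hX : ∀ a : ℝ, ![a, a, a + 1, a + 1] ∈ Mplane := fun a => ⟨a, a, rfl⟩
  have hY : ∀ a : ℝ, ![a, -a, a + 1, -a + 1] ∈ Mplane := fun a => ⟨a, -a, by norm_num⟩
  refine ⟨?_, fun a ha => ⟨hX a, hY a, min_nrm4_witness ha.le, dH4_witness_le_two⟩⟩
  rintro ⟨C, hC, hCM⟩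
  exact not_exists_pos_mul_le_of_linear_of_bounded (by positivity)
    (fun a ha => min_nrm4_witness ha.le) (fun _ _ => dH4_witness_le_two)
    ⟨C, hC, fun a _ => hCM _ (hX a) _ (hY a)⟩
end

section
/- Let M be a positive integer, let d_0 = M and d_1,…,d_k be positive integers, let A_i : ℝ^{d_{i-1}} → ℝ^{d_i} (i = 1,…,k) be affine maps, and let η : ℝ^d → ℝ^d denote the componentwise ReLU map η(u)_j = max(u_j, 0). Then the image f([0,1]^M) of the unit cube under f = η ∘ A_k ∘ η ∘ A_{k-1} ∘ ⋯ ∘ η ∘ A_1 is compact and is contained in a finite union of affine subspaces of ℝ^{d_k}, each of dimension at most M. -/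
open scoped BigOperators

/-- Componentwise ReLU: `η(u)_j = max(u_j, 0)`. -/
def relu {p : ℕ} (u : Fin p → ℝ) : Fin p → ℝ := fun j => max (u j) 0

/-- The ReLU network `net d W b j = η ∘ A_j ∘ η ∘ A_{j-1} ∘ ⋯ ∘ η ∘ A_1`, where the affine
map `A_{i+1} : ℝ^{d i} → ℝ^{d (i+1)}` is `x ↦ W i · x + b i`. -/
def net (d : ℕ → ℕ) (W : ∀ i : ℕ, Matrix (Fin (d (i + 1))) (Fin (d i)) ℝ)
    (b : ∀ i : ℕ, Fin (d (i + 1)) → ℝ) : (j : ℕ) → (Fin (d 0) → ℝ) → Fin (d j) → ℝ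
  | 0 => fun x => x
  | j + 1 => fun x => relu ((W j).mulVec (net d W b j x) + b j)

/-!
Compactness holds because the network is continuous. For the covering, note that at `u` the
ReLU map agrees with the coordinate projection `v ↦ 1_T · v`, where `T = {j | 0 ≤ u j}`; hence
ReLU sends a set covered by finitely many affine subspaces of dimension `≤ n` into the union of
its images under the `2^p` linear maps `v ↦ 1_T · v`, which is again such a set. Affine layers
preserve the property as well, so induction on the depth covers the range of the network by
finitely many affine subspaces of dimension at most `dim ℝ^M = M`.
-/

open Module

section AffineCover

variable (𝕜 : Type*) {V V' : Type*} [Field 𝕜] [AddCommGroup V] [Module 𝕜 V]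
  [AddCommGroup V'] [Module 𝕜 V']

def CoveredByAffineSubspaces (n : ℕ) (s : Set V) : Prop :=
  ∃ (m : ℕ) (A : Fin m → AffineSubspace 𝕜 V),
    (∀ i, finrank 𝕜 (A i).direction ≤ n) ∧ s ⊆ ⋃ i, (A i : Set V)

variable {𝕜}

theorem coveredByAffineSubspaces_of_finite {ι : Type*} [Finite ι] {n : ℕ} {s : Set V}
    (A : ι → AffineSubspace 𝕜 V) (hA : ∀ i, finrank 𝕜 (A i).direction ≤ n)
    (hs : s ⊆ ⋃ i, (A i : Set V)) : CoveredByAffineSubspaces 𝕜 n s := by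
  have e := (Finite.equivFin ι).symm
  refine ⟨Nat.card ι, A ∘ e, fun i => hA (e i), ?_⟩
  rwa [Function.comp_def, e.surjective.iUnion_comp fun i => (A i : Set V)]

theorem coveredByAffineSubspaces_univ [FiniteDimensional 𝕜 V] :
    CoveredByAffineSubspaces 𝕜 (finrank 𝕜 V) (Set.univ : Set V) :=
  ⟨1, fun _ => ⊤, fun _ => by rw [AffineSubspace.direction_top, finrank_top],
    fun _ _ => Set.mem_iUnion.mpr ⟨0, trivial⟩⟩

namespace CoveredByAffineSubspaces

variable {n : ℕ} {s t : Set V}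

theorem mono (ht : CoveredByAffineSubspaces 𝕜 n t) (hst : s ⊆ t) :
    CoveredByAffineSubspaces 𝕜 n s :=
  let ⟨m, A, hA, htA⟩ := ht
  ⟨m, A, hA, hst.trans htA⟩

theorem iUnion {ι : Type*} [Finite ι] {s : ι → Set V}
    (hs : ∀ i, CoveredByAffineSubspaces 𝕜 n (s i)) :
    CoveredByAffineSubspaces 𝕜 n (⋃ i, s i) := by
  choose m A hA hsA using hs
  refine coveredByAffineSubspaces_of_finite (fun p : Σ i, Fin (m i) => A p.1 p.2)
    (fun p => hA p.1 p.2) (Set.iUnion_subset fun i x hx => ?_)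
  obtain ⟨j, hj⟩ := Set.mem_iUnion.mp (hsA i hx)
  exact Set.mem_iUnion.mpr ⟨⟨i, j⟩, hj⟩

theorem image [FiniteDimensional 𝕜 V] (hs : CoveredByAffineSubspaces 𝕜 n s)
    (f : V →ᵃ[𝕜] V') : CoveredByAffineSubspaces 𝕜 n (f '' s) := by
  obtain ⟨m, A, hA, hsA⟩ := hs
  refine ⟨m, fun i => (A i).map f, fun i => ?_, ?_⟩
  · rw [AffineSubspace.map_direction]
    exact (Submodule.finrank_map_le _ _).trans (hA i)
  · rintro _ ⟨x, hx, rfl⟩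
    obtain ⟨i, hi⟩ := Set.mem_iUnion.mp (hsA hx)
    exact Set.mem_iUnion.mpr ⟨i, AffineSubspace.mem_map.mpr ⟨x, hi, rfl⟩⟩

end CoveredByAffineSubspaces

end AffineCover

noncomputable def indicatorLinearMap (R : Type*) {ι M : Type*} [Semiring R] [AddCommMonoid M]
    [Module R M] (T : Set ι) : (ι → M) →ₗ[R] (ι → M) where
  toFun := T.indicator
  map_add' := Set.indicator_add T
  map_smul' c v := Set.indicator_const_smul T c v

theorem relu_eq_indicator {p : ℕ} (u : Fin p → ℝ) : relu u = {j | 0 ≤ u j}.indicator u := by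
  funext j
  by_cases h : 0 ≤ u j
  · simp [relu, h]
  · simp [relu, h, (not_le.mp h).le]

theorem relu_image_subset {p : ℕ} (s : Set (Fin p → ℝ)) :
    relu '' s ⊆ ⋃ T : Set (Fin p), indicatorLinearMap ℝ T '' s := by
  rintro _ ⟨u, hu, rfl⟩
  exact Set.mem_iUnion.mpr ⟨_, u, hu, (relu_eq_indicator u).symm⟩

theorem CoveredByAffineSubspaces.relu_image {p n : ℕ} {s : Set (Fin p → ℝ)}
    (hs : CoveredByAffineSubspaces ℝ n s) : CoveredByAffineSubspaces ℝ n (relu '' s) :=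
  (iUnion fun T => hs.image (indicatorLinearMap ℝ T).toAffineMap).mono (relu_image_subset s)

theorem continuous_relu {p : ℕ} : Continuous (relu : (Fin p → ℝ) → Fin p → ℝ) :=
  continuous_pi fun j => (continuous_apply j).max continuous_const

section Network

variable (d : ℕ → ℕ) (W : ∀ i : ℕ, Matrix (Fin (d (i + 1))) (Fin (d i)) ℝ)
  (b : ∀ i : ℕ, Fin (d (i + 1)) → ℝ)

theorem continuous_net (j : ℕ) : Continuous (net d W b j) := by
  induction j with
  | zero => exact continuous_id
  | succ j ih =>
    exact continuous_relu.comp ((continuous_const.matrix_mulVec ih).add continuous_const)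

theorem coveredByAffineSubspaces_range_net (j : ℕ) :
    CoveredByAffineSubspaces ℝ (d 0) (Set.range (net d W b j)) := by
  induction j with
  | zero =>
    have huniv := coveredByAffineSubspaces_univ (𝕜 := ℝ) (V := Fin (d 0) → ℝ)
    rw [finrank_fin_fun] at huniv
    exact huniv.mono (Set.subset_univ _)
  | succ j ih =>
    let layer : (Fin (d j) → ℝ) →ᵃ[ℝ] (Fin (d (j + 1)) → ℝ) :=
      (W j).mulVecLin.toAffineMap + AffineMap.const ℝ _ (b j)
    have hrange :
        Set.range (net d W b (j + 1)) = relu '' (layer '' Set.range (net d W b j)) := by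
      rw [← Set.range_comp, ← Set.range_comp]
      rfl
    rw [hrange]
    exact (ih.image layer).relu_image

end Network

theorem relu_image_compact_subset_affine_union_general
    (M k : ℕ)
    (d : ℕ → ℕ) (hd0 : d 0 = M)
    (W : ∀ i : ℕ, Matrix (Fin (d (i + 1))) (Fin (d i)) ℝ)
    (b : ∀ i : ℕ, Fin (d (i + 1)) → ℝ) :
    IsCompact (net d W b k '' Set.Icc (0 : Fin (d 0) → ℝ) 1) ∧
    ∃ (m : ℕ) (A : Fin m → AffineSubspace ℝ (Fin (d k) → ℝ)),
      (∀ i, Module.finrank ℝ (A i).direction ≤ M) ∧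
      net d W b k '' Set.Icc (0 : Fin (d 0) → ℝ) 1 ⊆ ⋃ i, (A i : Set (Fin (d k) → ℝ)) :=
  ⟨isCompact_Icc.image (continuous_net d W b k),
    hd0 ▸ (coveredByAffineSubspaces_range_net d W b k).mono (Set.image_subset_range _ _)⟩

/-- The image of the unit cube `[0,1]^M` under a ReLU network
`f = η ∘ A_k ∘ η ∘ A_{k-1} ∘ ⋯ ∘ η ∘ A_1` (with `d 0 = M`) is compact and contained in a
finite union of affine subspaces of `ℝ^{d k}`, each of dimension at most `M`. -/
theorem relu_image_compact_subset_affine_union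
    (M k : ℕ) (hM : 0 < M)
    (d : ℕ → ℕ) (hd0 : d 0 = M) (hdpos : ∀ i ≤ k, 0 < d i)
    (W : ∀ i : ℕ, Matrix (Fin (d (i + 1))) (Fin (d i)) ℝ)
    (b : ∀ i : ℕ, Fin (d (i + 1)) → ℝ) :
    IsCompact (net d W b k '' Set.Icc (0 : Fin (d 0) → ℝ) 1) ∧
    ∃ (m : ℕ) (A : Fin m → AffineSubspace ℝ (Fin (d k) → ℝ)),
      (∀ i, Module.finrank ℝ (A i).direction ≤ M) ∧
      net d W b k '' Set.Icc (0 : Fin (d 0) → ℝ) 1 ⊆ ⋃ i, (A i : Set (Fin (d k) → ℝ)) :=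
  relu_image_compact_subset_affine_union_general M k d hd0 W b
end

section
/- Let m, n be positive integers, let U be an open neighborhood of 0 in ℝ^m, and let φ : ℝ^m → ℝ^n be continuously differentiable on U with injective derivative Dφ(0) at 0. Let T : ℝ^n → ℝ^n be the orthogonal projection onto the range of Dφ(0). Let (t_k) and (s_k) be sequences in U with t_k → 0, s_k → 0, and t_k ≠ s_k for all k, and set X_k = φ(t_k), Y_k = φ(s_k). Then for all sufficiently large k one has X_k ≠ Y_k, and ‖T(X_k − Y_k)‖ / ‖X_k − Y_k‖ → 1 and ‖(I − T)(X_k − Y_k)‖ / ‖X_k − Y_k‖ → 0 as k → ∞, where ‖·‖ is the Euclidean norm on ℝ^n. -/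
/-!
Strict differentiability at `0` gives `φ tₖ - φ sₖ = Dφ(0) (tₖ - sₖ) + o(‖tₖ - sₖ‖)`, and an
injective linear map on a finite-dimensional space is antilipschitz, so `‖tₖ - sₖ‖` is in turn
`O(‖φ tₖ - φ sₖ‖)`. Hence `φ tₖ - φ sₖ` lies at distance `o(‖φ tₖ - φ sₖ‖)` from the range of
`Dφ(0)`, i.e. its orthogonal projection onto that range is asymptotically equivalent to it.
-/

open Filter Topology Asymptotics

section Asymptotics

variable {α E F : Type*} {l : Filter α}

theorem AntilipschitzWith.isBigO_comp [SeminormedAddCommGroup E] [SeminormedAddCommGroup F]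
    {K : NNReal} {A : E → F} (hA : AntilipschitzWith K A) (hA0 : A 0 = 0) (l : Filter α)
    (u : α → E) : u =O[l] fun x => A (u x) :=
  IsBigO.of_bound K <| Eventually.of_forall fun x => by
    simpa [dist_eq_norm, hA0] using hA.le_mul_dist (u x) 0

theorem AntilipschitzWith.isBigO_of_isLittleO_sub_comp [SeminormedAddCommGroup E]
    [SeminormedAddCommGroup F] {K : NNReal} {A : E → F} (hA : AntilipschitzWith K A)
    (hA0 : A 0 = 0) {u : α → E} {w : α → F} (h : (fun x => w x - A (u x)) =o[l] u) :
    u =O[l] w := by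
  have hu := hA.isBigO_comp hA0 l u
  simpa using hu.trans (h.trans_isBigO hu).right_isBigO_add

theorem Asymptotics.IsEquivalent.norm [NormedAddCommGroup E] {u v : α → E} (h : u ~[l] v) :
    (fun x => ‖u x‖) ~[l] fun x => ‖v x‖ :=
  ((isBigO_of_le l fun x => by simpa using abs_norm_sub_norm_le (u x) (v x)).trans_isLittleO
    h.isLittleO).norm_right

end Asymptotics

section StrictDeriv

variable {α 𝕜 E F : Type*} [NontriviallyNormedField 𝕜] [NormedAddCommGroup E] [NormedSpace 𝕜 E]
  [NormedAddCommGroup F] [NormedSpace 𝕜 F] {f : E → F} {f' : E →L[𝕜] F} {x : E} {l : Filter α}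
  {t s : α → E}

theorem HasStrictFDerivAt.isLittleO_of_tendsto (hf : HasStrictFDerivAt f f' x)
    (ht : Tendsto t l (𝓝 x)) (hs : Tendsto s l (𝓝 x)) :
    (fun k => f (t k) - f (s k) - f' (t k - s k)) =o[l] fun k => t k - s k :=
  hf.isLittleO.comp_tendsto (ht.prodMk_nhds hs)

theorem HasStrictFDerivAt.isBigO_sub_of_antilipschitz (hf : HasStrictFDerivAt f f' x)
    {K : NNReal} (hf' : AntilipschitzWith K f') (ht : Tendsto t l (𝓝 x))
    (hs : Tendsto s l (𝓝 x)) :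
    (fun k => t k - s k) =O[l] fun k => f (t k) - f (s k) :=
  hf'.isBigO_of_isLittleO_sub_comp (map_zero f') (hf.isLittleO_of_tendsto ht hs)

theorem HasStrictFDerivAt.isLittleO_sub_of_antilipschitz (hf : HasStrictFDerivAt f f' x)
    {K : NNReal} (hf' : AntilipschitzWith K f') (ht : Tendsto t l (𝓝 x))
    (hs : Tendsto s l (𝓝 x)) :
    (fun k => f (t k) - f (s k) - f' (t k - s k)) =o[l] fun k => f (t k) - f (s k) :=
  (hf.isLittleO_of_tendsto ht hs).trans_isBigO (hf.isBigO_sub_of_antilipschitz hf' ht hs)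

end StrictDeriv

section Projection

variable {α 𝕜 E : Type*} [RCLike 𝕜] [NormedAddCommGroup E] [InnerProductSpace 𝕜 E]
  (K : Submodule 𝕜 E) [K.HasOrthogonalProjection]

theorem Submodule.norm_sub_starProjection_le {y : E} (hy : y ∈ K) (x : E) :
    ‖x - K.starProjection x‖ ≤ ‖x - y‖ := by
  rw [starProjection_minimal]
  exact ciInf_le ⟨0, Set.forall_mem_range.mpr fun _ => norm_nonneg _⟩ (⟨y, hy⟩ : K)

theorem Submodule.isEquivalent_starProjection {l : Filter α} {x a : α → E} (ha : ∀ k, a k ∈ K)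
    (h : (fun k => x k - a k) =o[l] x) : (fun k => K.starProjection (x k)) ~[l] x := by
  refine (isBigO_of_le l fun k => ?_).trans_isLittleO h
  rw [Pi.sub_apply, norm_sub_rev]
  exact K.norm_sub_starProjection_le (ha k) (x k)

end Projection

theorem tangent_projection_ratio_general
    (m n : ℕ)
    (U : Set (EuclideanSpace ℝ (Fin m))) (hU : IsOpen U)
    (h0U : (0 : EuclideanSpace ℝ (Fin m)) ∈ U)
    (φ : EuclideanSpace ℝ (Fin m) → EuclideanSpace ℝ (Fin n))
    (hφ : ContDiffOn ℝ 1 φ U)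
    (hinj : Function.Injective ⇑(fderiv ℝ φ 0))
    (t s : ℕ → EuclideanSpace ℝ (Fin m))
    (htlim : Filter.Tendsto t Filter.atTop (nhds 0))
    (hslim : Filter.Tendsto s Filter.atTop (nhds 0))
    (hne : ∀ k, t k ≠ s k) :
    (∃ k₀ : ℕ, ∀ k ≥ k₀, φ (t k) ≠ φ (s k)) ∧
    Filter.Tendsto
      (fun k => ‖(Submodule.orthogonalProjectionOnto (LinearMap.range
          (fderiv ℝ φ 0 : EuclideanSpace ℝ (Fin m) →ₗ[ℝ] EuclideanSpace ℝ (Fin n)))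
          (φ (t k) - φ (s k)) : EuclideanSpace ℝ (Fin n))‖ / ‖φ (t k) - φ (s k)‖)
      Filter.atTop (nhds 1) ∧
    Filter.Tendsto
      (fun k => ‖(φ (t k) - φ (s k)) - (Submodule.orthogonalProjectionOnto (LinearMap.range
          (fderiv ℝ φ 0 : EuclideanSpace ℝ (Fin m) →ₗ[ℝ] EuclideanSpace ℝ (Fin n)))
          (φ (t k) - φ (s k)) : EuclideanSpace ℝ (Fin n))‖ / ‖φ (t k) - φ (s k)‖)
      Filter.atTop (nhds 0) := by
  set A := fderiv ℝ φ 0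
  set W := LinearMap.range (A : EuclideanSpace ℝ (Fin m) →ₗ[ℝ] EuclideanSpace ℝ (Fin n))
  have hA : HasStrictFDerivAt φ A 0 :=
    (hφ.contDiffAt (hU.mem_nhds h0U)).hasStrictFDerivAt one_ne_zero
  obtain ⟨K, -, hK⟩ := (A : EuclideanSpace ℝ (Fin m) →ₗ[ℝ] EuclideanSpace ℝ (Fin n))
    |>.exists_antilipschitzWith (LinearMap.ker_eq_bot.mpr hinj)
  have hD : ∀ᶠ k in atTop, φ (t k) - φ (s k) ≠ 0 :=
    (hA.isBigO_sub_of_antilipschitz hK htlim hslim).eq_zero_imp.mono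
      fun k hk heq => hne k (sub_eq_zero.mp (hk heq))
  have hequiv : (fun k => W.starProjection (φ (t k) - φ (s k))) ~[atTop]
      fun k => φ (t k) - φ (s k) :=
    W.isEquivalent_starProjection (fun k => LinearMap.mem_range_self _ (t k - s k))
      (hA.isLittleO_sub_of_antilipschitz hK htlim hslim)
  refine ⟨eventually_atTop.mp (hD.mono fun k => sub_ne_zero.mp), ?_, ?_⟩
  · exact (isEquivalent_iff_tendsto_one (hD.mono fun k => norm_ne_zero_iff.mpr)).mp hequiv.norm
  · refine hequiv.isLittleO.norm_norm.tendsto_div_nhds_zero.congr fun k => ?_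
    rw [Pi.sub_apply, norm_sub_rev]
    rfl

/-- Let `φ : ℝ^m → ℝ^n` be C¹ near `0` with injective derivative at `0`, and let
`T` be the orthogonal projection onto the range of `Dφ(0)`. For sequences `t_k → 0`, `s_k → 0`
in `U` with `t_k ≠ s_k`, setting `X_k = φ(t_k)`, `Y_k = φ(s_k)`, eventually `X_k ≠ Y_k`, and
`‖T(X_k − Y_k)‖/‖X_k − Y_k‖ → 1` while `‖(I − T)(X_k − Y_k)‖/‖X_k − Y_k‖ → 0`. -/
theorem tangent_projection_ratio
    (m n : ℕ) (hm : 0 < m) (hn : 0 < n)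
    (U : Set (EuclideanSpace ℝ (Fin m))) (hU : IsOpen U)
    (h0U : (0 : EuclideanSpace ℝ (Fin m)) ∈ U)
    (φ : EuclideanSpace ℝ (Fin m) → EuclideanSpace ℝ (Fin n))
    (hφ : ContDiffOn ℝ 1 φ U)
    (hinj : Function.Injective ⇑(fderiv ℝ φ 0))
    (t s : ℕ → EuclideanSpace ℝ (Fin m))
    (ht : ∀ k, t k ∈ U) (hs : ∀ k, s k ∈ U)
    (htlim : Filter.Tendsto t Filter.atTop (nhds 0))
    (hslim : Filter.Tendsto s Filter.atTop (nhds 0))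
    (hne : ∀ k, t k ≠ s k) :
    (∃ k₀ : ℕ, ∀ k ≥ k₀, φ (t k) ≠ φ (s k)) ∧
    Filter.Tendsto
      (fun k => ‖(Submodule.orthogonalProjectionOnto (LinearMap.range
          (fderiv ℝ φ 0 : EuclideanSpace ℝ (Fin m) →ₗ[ℝ] EuclideanSpace ℝ (Fin n)))
          (φ (t k) - φ (s k)) : EuclideanSpace ℝ (Fin n))‖ / ‖φ (t k) - φ (s k)‖)
      Filter.atTop (nhds 1) ∧
    Filter.Tendsto
      (fun k => ‖(φ (t k) - φ (s k)) - (Submodule.orthogonalProjectionOnto (LinearMap.range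
          (fderiv ℝ φ 0 : EuclideanSpace ℝ (Fin m) →ₗ[ℝ] EuclideanSpace ℝ (Fin n)))
          (φ (t k) - φ (s k)) : EuclideanSpace ℝ (Fin n))‖ / ‖φ (t k) - φ (s k)‖)
      Filter.atTop (nhds 0) :=
  tangent_projection_ratio_general m n U hU h0U φ hφ hinj t s htlim hslim hne
end
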